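/- arXiv:1109.3296 — 4 statements merged into one kernel-verified Lean document; each statement's English description precedes it below -/
import Mathlib

section
/- Assume D := det Σ^{(f₁,…,f_k,g)}_{(f₁,…,f_k,g)} ≠ 0 (the Gram determinant of (f₁,…,f_k,g) is nonzero) and let h ∈ ℝ. Then a vector u ∈ V satisfies ⟪u, f_i⟫ = 0 for all i ∈ {1,…,k} and ⟪u, g⟫ = h if and only if the vector w := u − (h/D) · v₀ is orthogonal to each of f₁,…,f_k and to g; moreover (h/D) · v₀ lies in the span of {f₁,…,f_k,g}, so u = (h/D)·v₀ + w is the unique decomposition of such a solution into a component in Sp[f₁,…,f_k,g] and a component in its orthogonal complement. -/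
open scoped RealInnerProductSpace

/-- The matrix `Σ^{(a₁,…,a_r)}_{(b₁,…,b_s)}` whose `(p,q)` entry is `⟪b_q, a_p⟫`. -/
noncomputable def sigmaMat {V : Type*} [NormedAddCommGroup V] [InnerProductSpace ℝ V]
    {r s : ℕ} (a : Fin r → V) (b : Fin s → V) : Matrix (Fin r) (Fin s) ℝ :=
  Matrix.of fun p q => ⟪b q, a p⟫

/-- The standard control vector field built from the `k+1` vectors `f₀,…,f_k`
and the vector `g`. -/
noncomputable def v0 {V : Type*} [NormedAddCommGroup V] [InnerProductSpace ℝ V]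
    {k : ℕ} (f : Fin (k+1) → V) (g : V) : V :=
  (∑ i : Fin (k+1),
    ((-1 : ℝ) ^ ((i : ℕ) + k + 1) *
      (sigmaMat f (Fin.snoc (fun j => f (i.succAbove j)) g)).det) • f i)
  + (sigmaMat f f).det • g

/-! Expanding `det Σ^{(f, x)}_{(f, g)}` along its last row shows that `⟪v₀, x⟫` is this
determinant. It vanishes for `x = f i` (two equal rows) and equals `D` for `x = g`, so subtracting
`(h / D) • v₀`, a vector of `K = span (f, g)`, leaves every `⟪·, f i⟫` unchanged and lowers
`⟪·, g⟫` by exactly `h`. Uniqueness of the decomposition is `K ⊓ Kᗮ = ⊥`. -/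

theorem Fin.snoc_comp_castSucc_succAbove {n : ℕ} {α : Type*} (f : Fin (n + 1) → α) (a : α)
    (i : Fin (n + 1)) :
    Fin.snoc f a ∘ i.castSucc.succAbove = Fin.snoc (fun j => f (i.succAbove j)) a := by
  funext q
  refine Fin.lastCases ?_ (fun q => ?_) q
  · simp [Fin.succAbove_castSucc_of_le _ _ (Fin.le_last i)]
  · simp [Fin.castSucc_succAbove_castSucc]

namespace Submodule

variable {𝕜 E : Type*} [RCLike 𝕜] [NormedAddCommGroup E] [InnerProductSpace 𝕜 E]

theorem mem_orthogonal_span_iff {s : Set E} {w : E} :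
    w ∈ (span 𝕜 s)ᗮ ↔ ∀ v ∈ s, inner 𝕜 w v = 0 := by
  rw [← span_singleton_le_iff_mem, ← isOrtho_iff_le, isOrtho_span]
  simp

theorem eq_of_add_eq_of_sub_mem_orthogonal {K : Submodule 𝕜 E} {u a b c : E}
    (ha : a ∈ K) (hb : b ∈ Kᗮ) (hc : c ∈ K) (huc : u - c ∈ Kᗮ) (hu : u = a + b) : a = c := by
  have hK : a - c ∈ K := K.sub_mem ha hc
  have hKo : a - c ∈ Kᗮ := by
    rw [show a - c = (u - c) - b by rw [hu]; abel]
    exact Kᗮ.sub_mem huc hb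
  exact sub_eq_zero.1 (disjoint_def.1 K.orthogonal_disjoint _ hK hKo)

end Submodule

section ControlField

variable {V : Type*} [NormedAddCommGroup V] [InnerProductSpace ℝ V]

theorem sigmaMat_submatrix {r s r' s' : ℕ} (a : Fin r → V) (b : Fin s → V)
    (p : Fin r' → Fin r) (q : Fin s' → Fin s) :
    (sigmaMat a b).submatrix p q = sigmaMat (a ∘ p) (b ∘ q) :=
  rfl

/-- The coefficients of `v₀` are the cofactors of the last row of this determinant. -/
theorem inner_v0 {k : ℕ} (f : Fin (k+1) → V) (g x : V) :
    ⟪v0 f g, x⟫ = (sigmaMat (Fin.snoc f x) (Fin.snoc f g)).det := by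
  rw [Matrix.det_succ_row _ (Fin.last (k+1)), Fin.sum_univ_castSucc, v0, inner_add_left,
    sum_inner, real_inner_smul_left]
  simp only [sigmaMat_submatrix, Fin.succAbove_last, Fin.snoc_comp_castSucc,
    Fin.snoc_comp_castSucc_succAbove]
  simp only [sigmaMat, Matrix.of_apply, Fin.snoc_last, Fin.snoc_castSucc, real_inner_smul_left,
    Fin.val_last, Fin.val_castSucc]
  congr 1
  · refine Finset.sum_congr rfl fun i _ => ?_
    rw [show k + 1 + (i : ℕ) = i + k + 1 by omega]
    ring
  · rw [Even.neg_one_pow ⟨k + 1, rfl⟩]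
    ring

theorem inner_v0_apply_eq_zero {k : ℕ} (f : Fin (k+1) → V) (g : V) (j : Fin (k+1)) :
    ⟪v0 f g, f j⟫ = 0 := by
  rw [inner_v0]
  refine Matrix.det_zero_of_row_eq (Fin.castSucc_lt_last j).ne ?_
  ext q
  simp [sigmaMat]

theorem v0_mem_span {k : ℕ} (f : Fin (k+1) → V) (g : V) :
    v0 f g ∈ Submodule.span ℝ (Set.range f ∪ {g}) :=
  Submodule.add_mem _
    (Submodule.sum_mem _ fun i _ => Submodule.smul_mem _ _
      (Submodule.subset_span (Or.inl ⟨i, rfl⟩)))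
    (Submodule.smul_mem _ _ (Submodule.subset_span (Or.inr rfl)))

end ControlField

theorem stmt_1_general {V : Type*} [NormedAddCommGroup V] [InnerProductSpace ℝ V]
    (k : ℕ) (f : Fin (k+1) → V) (g : V)
    (D : ℝ) (hDdef : D = (sigmaMat (Fin.snoc f g) (Fin.snoc f g)).det) (hD : D ≠ 0)
    (h : ℝ) (u : V) :
    -- u is a solution iff w := u - (h/D) • v₀ is orthogonal to all f_i and to g
    (((∀ i : Fin (k+1), ⟪u, f i⟫ = 0) ∧ ⟪u, g⟫ = h) ↔
      ((∀ i : Fin (k+1), ⟪u - (h / D) • v0 f g, f i⟫ = 0) ∧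
        ⟪u - (h / D) • v0 f g, g⟫ = 0)) ∧
    -- (h/D) • v₀ lies in the span of {f₁,…,f_k,g}
    (h / D) • v0 f g ∈ Submodule.span ℝ (Set.range f ∪ {g}) ∧
    -- uniqueness of the decomposition of a solution into a component in the span
    -- and a component in its orthogonal complement
    (((∀ i : Fin (k+1), ⟪u, f i⟫ = 0) ∧ ⟪u, g⟫ = h) →
      ∀ a b : V, a ∈ Submodule.span ℝ (Set.range f ∪ {g}) →
        b ∈ (Submodule.span ℝ (Set.range f ∪ {g}))ᗮ → u = a + b →
        a = (h / D) • v0 f g ∧ b = u - (h / D) • v0 f g) := by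
  set K := Submodule.span ℝ (Set.range f ∪ {g})
  set w := u - (h / D) • v0 f g
  have hwf (i : Fin (k+1)) : ⟪w, f i⟫ = ⟪u, f i⟫ := by
    rw [inner_sub_left, real_inner_smul_left, inner_v0_apply_eq_zero, mul_zero, sub_zero]
  have hwg : ⟪w, g⟫ = ⟪u, g⟫ - h := by
    rw [inner_sub_left, real_inner_smul_left, inner_v0, ← hDdef, div_mul_cancel₀ _ hD]
  have hsol : ((∀ i, ⟪u, f i⟫ = 0) ∧ ⟪u, g⟫ = h) ↔ (∀ i, ⟪w, f i⟫ = 0) ∧ ⟪w, g⟫ = 0 := by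
    simp only [hwf, hwg, sub_eq_zero]
  have hmem : (h / D) • v0 f g ∈ K := K.smul_mem _ (v0_mem_span f g)
  refine ⟨hsol, hmem, fun hu a b ha hb hab => ?_⟩
  have hw : w ∈ Kᗮ := by
    obtain ⟨hf, hg⟩ := hsol.1 hu
    refine Submodule.mem_orthogonal_span_iff.2 ?_
    rintro _ (⟨i, rfl⟩ | rfl)
    exacts [hf i, hg]
  have ha' : a = (h / D) • v0 f g :=
    Submodule.eq_of_add_eq_of_sub_mem_orthogonal ha hb hmem hw hab
  exact ⟨ha', by rw [eq_sub_iff_add_eq, hab, ha', add_comm]⟩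

theorem stmt_1 {V : Type*} [NormedAddCommGroup V] [InnerProductSpace ℝ V]
    [FiniteDimensional ℝ V] (k : ℕ) (f : Fin (k+1) → V) (g : V)
    (D : ℝ) (hDdef : D = (sigmaMat (Fin.snoc f g) (Fin.snoc f g)).det) (hD : D ≠ 0)
    (h : ℝ) (u : V) :
    -- u is a solution iff w := u - (h/D) • v₀ is orthogonal to all f_i and to g
    (((∀ i : Fin (k+1), ⟪u, f i⟫ = 0) ∧ ⟪u, g⟫ = h) ↔
      ((∀ i : Fin (k+1), ⟪u - (h / D) • v0 f g, f i⟫ = 0) ∧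
        ⟪u - (h / D) • v0 f g, g⟫ = 0)) ∧
    -- (h/D) • v₀ lies in the span of {f₁,…,f_k,g}
    (h / D) • v0 f g ∈ Submodule.span ℝ (Set.range f ∪ {g}) ∧
    -- uniqueness of the decomposition of a solution into a component in the span
    -- and a component in its orthogonal complement
    (((∀ i : Fin (k+1), ⟪u, f i⟫ = 0) ∧ ⟪u, g⟫ = h) →
      ∀ a b : V, a ∈ Submodule.span ℝ (Set.range f ∪ {g}) →
        b ∈ (Submodule.span ℝ (Set.range f ∪ {g}))ᗮ → u = a + b →
        a = (h / D) • v0 f g ∧ b = u - (h / D) • v0 f g) :=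
  stmt_1_general k f g D hDdef hD h u
end

section
/- For every s ∈ {1,…,k} and every w ∈ V one has T(f_s, w) = 0; that is, each vector f_s lies in the kernel of the symmetric bilinear form T. -/
/-!
Writing `g v := (⟪v, f i⟫)ᵢ`, the cofactor sign `(-1)^(i+j+1) M_{ij}` is minus the `(j,i)` entry
of the adjugate of `Γ_f`, so `T(v,w) = det Γ_f ⟪v,w⟫ - g w ⬝ (adj Γ_f) g v`. For `v = f_s` the
vector `g v` is the `s`-th column of `Γ_f`, and `adj Γ_f · Γ_f = det Γ_f · 1` collapses the second
term to `det Γ_f ⟪w, f_s⟫`.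
-/

open scoped RealInnerProductSpace

/-- The Gram matrix of `f₀,…,f_k`: the `(p,q)` entry is `⟪f_q, f_p⟫`. -/
noncomputable def gramMat {V : Type*} [NormedAddCommGroup V] [InnerProductSpace ℝ V]
    {k : ℕ} (f : Fin (k+1) → V) : Matrix (Fin (k+1)) (Fin (k+1)) ℝ :=
  Matrix.of fun p q => ⟪f q, f p⟫

/-- `M_{ij}`: the determinant of the matrix obtained from the Gram matrix of `f`
by deleting the `i`-th row and the `j`-th column. -/
noncomputable def gramMinor {V : Type*} [NormedAddCommGroup V] [InnerProductSpace ℝ V]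
    {k : ℕ} (f : Fin (k+1) → V) (i j : Fin (k+1)) : ℝ :=
  ((gramMat f).submatrix i.succAbove j.succAbove).det

/-- The symmetric bilinear form
`T(v,w) = Σ_{i,j} (−1)^{i+j+1} M_{ij} ⟪v, f_i⟫ ⟪w, f_j⟫ + (det Γ_f) ⟪v, w⟫`. -/
noncomputable def Tform {V : Type*} [NormedAddCommGroup V] [InnerProductSpace ℝ V]
    {k : ℕ} (f : Fin (k+1) → V) (v w : V) : ℝ :=
  (∑ i : Fin (k+1), ∑ j : Fin (k+1),
    (-1 : ℝ) ^ ((i : ℕ) + (j : ℕ) + 1) * gramMinor f i j * ⟪v, f i⟫ * ⟪w, f j⟫)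
  + (gramMat f).det * ⟪v, w⟫

open Matrix

theorem Matrix.adjugate_mulVec_col {n R : Type*} [Fintype n] [DecidableEq n] [CommRing R]
    (A : Matrix n n R) (s : n) : A.adjugate *ᵥ A.col s = A.det • Pi.single s 1 := by
  rw [← mulVec_single_one, mulVec_mulVec, adjugate_mul, smul_mulVec, one_mulVec]

section Gram

variable {V : Type*} [NormedAddCommGroup V] [InnerProductSpace ℝ V] {k : ℕ} (f : Fin (k+1) → V)

def gramVec (v : V) : Fin (k+1) → ℝ := fun i => ⟪v, f i⟫

theorem gramVec_apply_self (s : Fin (k+1)) : gramVec f (f s) = (gramMat f).col s := rfl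

theorem neg_one_pow_mul_gramMinor (i j : Fin (k+1)) :
    (-1 : ℝ) ^ ((i : ℕ) + (j : ℕ) + 1) * gramMinor f i j = -(gramMat f).adjugate j i := by
  rw [adjugate_fin_succ_eq_det_submatrix, gramMinor, pow_succ]
  ring

theorem Tform_eq_sub_dotProduct_adjugate_mulVec (v w : V) :
    Tform f v w = (gramMat f).det * ⟪v, w⟫
      - gramVec f w ⬝ᵥ ((gramMat f).adjugate *ᵥ gramVec f v) := by
  simp only [Tform, neg_one_pow_mul_gramMinor, dotProduct, mulVec, gramVec, Finset.mul_sum]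
  rw [Finset.sum_comm, sub_eq_neg_add, ← Finset.sum_neg_distrib]
  congr 1
  refine Finset.sum_congr rfl fun j _ => ?_
  rw [← Finset.sum_neg_distrib]
  exact Finset.sum_congr rfl fun i _ => by ring

end Gram

theorem stmt_5_general {V : Type*} [NormedAddCommGroup V] [InnerProductSpace ℝ V]
    (k : ℕ) (f : Fin (k+1) → V) :
    ∀ s : Fin (k+1), ∀ w : V, Tform f (f s) w = 0 := by
  intro s w
  rw [Tform_eq_sub_dotProduct_adjugate_mulVec, gramVec_apply_self, adjugate_mulVec_col,
    dotProduct_smul, dotProduct_single, gramVec, real_inner_comm, smul_eq_mul, mul_one, sub_self]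

theorem stmt_5 {V : Type*} [NormedAddCommGroup V] [InnerProductSpace ℝ V]
    [FiniteDimensional ℝ V] (k : ℕ) (f : Fin (k+1) → V) :
    ∀ s : Fin (k+1), ∀ w : V, Tform f (f s) w = 0 :=
  stmt_5_general k f
end

section
/- Assume f₁,…,f_k are linearly independent and let W := (Sp[f₁,…,f_k])ᗮ be the orthogonal complement of their span. Then: (a) T♯(f_s) = 0 for every s; (b) T♯(v) ∈ W for every v ∈ V; (c) T♯(w) = (det Γ_f) · w for every w ∈ W. In particular, since det Γ_f ≠ 0, the restriction of T♯ to W is a linear bijection of W onto itself, and its inverse is given by w ↦ (1/det Γ_f) · w. -/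
open scoped RealInnerProductSpace

/-- The map `T♯(v) = Σ_{i,j} (−1)^{i+j+1} M_{ij} ⟪v, f_i⟫ • f_j + (det Γ_f) • v`. -/
noncomputable def Tsharp {V : Type*} [NormedAddCommGroup V] [InnerProductSpace ℝ V]
    {k : ℕ} (f : Fin (k+1) → V) (v : V) : V :=
  (∑ i : Fin (k+1), ∑ j : Fin (k+1),
    ((-1 : ℝ) ^ ((i : ℕ) + (j : ℕ) + 1) * gramMinor f i j * ⟪v, f i⟫) • f j)
  + (gramMat f).det • v

/-!
With `c(v) = (⟪f i, v⟫)ᵢ` and `Γ` the Gram matrix, the signed minors are the entries of `-adj Γ`,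
so `T♯ v = (det Γ) • v - ∑ⱼ (adj Γ *ᵥ c(v))ⱼ • fⱼ`. Pairing with `f_s` turns the sum into
`(Γ * adj Γ *ᵥ c(v))_s = det Γ * ⟪f s, v⟫`, which cancels the first term, so `T♯ v ∈ W`.
As `T♯ v - (det Γ) • v` lies in the span, `T♯ (f s)` lies in both the span and `W`, hence
vanishes. On `W` the coefficients `c(w)` vanish, so `T♯ = det Γ • id` there, and `det Γ ≠ 0`
because the Gram matrix of an independent family is positive definite.
-/

open Matrix

section

variable {𝕜 E : Type*} [RCLike 𝕜] [NormedAddCommGroup E] [InnerProductSpace 𝕜 E]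

theorem inner_sum_smul_eq_gram_mulVec {ι : Type*} [Fintype ι] (f : ι → E) (a : ι → 𝕜)
    (s : ι) :
    inner 𝕜 (f s) (∑ j, a j • f j) = (gram 𝕜 f *ᵥ a) s := by
  simp [mulVec, dotProduct, inner_sum, inner_smul_right, gram_apply, mul_comm]

theorem mem_orthogonal_span_range_iff {ι : Type*} (f : ι → E) (v : E) :
    v ∈ (Submodule.span 𝕜 (Set.range f))ᗮ ↔ ∀ i, inner 𝕜 (f i) v = 0 := by
  rw [← Submodule.span_singleton_le_iff_mem, ← Submodule.isOrtho_iff_le, Submodule.isOrtho_comm,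
    Submodule.isOrtho_span]
  simp

end

section

variable {V : Type*} [NormedAddCommGroup V] [InnerProductSpace ℝ V] {k : ℕ}

theorem gramMat_eq_gram (f : Fin (k+1) → V) : gramMat f = gram ℝ f :=
  Matrix.ext fun _ _ => real_inner_comm _ _

theorem Tsharp_eq_sub (f : Fin (k+1) → V) (v : V) :
    Tsharp f v =
      (gramMat f).det • v - ∑ j, ((gramMat f).adjugate *ᵥ fun i => ⟪f i, v⟫) j • f j := by
  have hminor : ∀ i j : Fin (k+1),
      (-1 : ℝ) ^ ((i : ℕ) + (j : ℕ) + 1) * gramMinor f i j = -(gramMat f).adjugate j i := by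
    intro i j
    rw [adjugate_fin_succ_eq_det_submatrix, gramMinor, pow_succ]
    ring
  simp only [Tsharp, hminor, mulVec, dotProduct, Finset.sum_smul, real_inner_comm (f _) v,
    neg_mul, neg_smul, Finset.sum_neg_distrib]
  rw [Finset.sum_comm]
  abel

theorem inner_Tsharp_eq_zero (f : Fin (k+1) → V) (v : V) (s : Fin (k+1)) :
    ⟪f s, Tsharp f v⟫ = 0 := by
  rw [Tsharp_eq_sub, inner_sub_right, real_inner_smul_right, inner_sum_smul_eq_gram_mulVec,
    ← gramMat_eq_gram, mulVec_mulVec, mul_adjugate, smul_mulVec, one_mulVec]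
  simp

theorem Tsharp_mem_orthogonal (f : Fin (k+1) → V) (v : V) :
    Tsharp f v ∈ (Submodule.span ℝ (Set.range f))ᗮ :=
  (mem_orthogonal_span_range_iff f _).2 (inner_Tsharp_eq_zero f v)

theorem smul_sub_Tsharp_mem_span (f : Fin (k+1) → V) (v : V) :
    (gramMat f).det • v - Tsharp f v ∈ Submodule.span ℝ (Set.range f) := by
  rw [Tsharp_eq_sub, sub_sub_cancel]
  exact (Submodule.mem_span_range_iff_exists_fun ℝ).2 ⟨_, rfl⟩

theorem Tsharp_apply_self (f : Fin (k+1) → V) (s : Fin (k+1)) : Tsharp f (f s) = 0 := by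
  have hfs : f s ∈ Submodule.span ℝ (Set.range f) := Submodule.subset_span ⟨s, rfl⟩
  have hspan : Tsharp f (f s) ∈ Submodule.span ℝ (Set.range f) :=
    (Submodule.sub_mem_iff_right _ (Submodule.smul_mem _ _ hfs)).1
      (smul_sub_Tsharp_mem_span f (f s))
  exact Submodule.disjoint_def.1 (Submodule.orthogonal_disjoint _) _ hspan
    (Tsharp_mem_orthogonal f (f s))

theorem Tsharp_eq_smul_of_mem_orthogonal (f : Fin (k+1) → V) {w : V}
    (hw : w ∈ (Submodule.span ℝ (Set.range f))ᗮ) : Tsharp f w = (gramMat f).det • w := by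
  have hc : (fun i => ⟪f i, w⟫) = 0 := funext ((mem_orthogonal_span_range_iff f w).1 hw)
  simp [Tsharp_eq_sub, hc]

theorem det_gramMat_ne_zero {f : Fin (k+1) → V} (hf : LinearIndependent ℝ f) :
    (gramMat f).det ≠ 0 := by
  rw [gramMat_eq_gram]
  exact det_gram_ne_zero_iff_linearIndependent.2 hf

end

theorem stmt_8_general {V : Type*} [NormedAddCommGroup V] [InnerProductSpace ℝ V]
    (k : ℕ) (f : Fin (k+1) → V)
    (hf : LinearIndependent ℝ f) :
    -- (a) T♯(f_s) = 0 for every s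
    (∀ s : Fin (k+1), Tsharp f (f s) = 0) ∧
    -- (b) T♯(v) ∈ W for every v
    (∀ v : V, Tsharp f v ∈ (Submodule.span ℝ (Set.range f))ᗮ) ∧
    -- (c) T♯(w) = (det Γ_f) • w for every w ∈ W
    (∀ w ∈ (Submodule.span ℝ (Set.range f))ᗮ, Tsharp f w = (gramMat f).det • w) ∧
    -- det Γ_f ≠ 0
    (gramMat f).det ≠ 0 ∧
    -- the restriction of T♯ to W is a bijection of W onto itself
    Set.BijOn (Tsharp f) ((Submodule.span ℝ (Set.range f))ᗮ : Set V)
      ((Submodule.span ℝ (Set.range f))ᗮ : Set V) ∧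
    -- whose inverse is given by w ↦ (1/det Γ_f) • w
    (∀ w ∈ (Submodule.span ℝ (Set.range f))ᗮ,
      Tsharp f ((1 / (gramMat f).det) • w) = w ∧
      (1 / (gramMat f).det) • Tsharp f w = w) := by
  set W := (Submodule.span ℝ (Set.range f))ᗮ
  have hdet := det_gramMat_ne_zero hf
  have hinv : ∀ w ∈ W, Tsharp f ((1 / (gramMat f).det) • w) = w ∧
      (1 / (gramMat f).det) • Tsharp f w = w := fun w hw => by
    rw [Tsharp_eq_smul_of_mem_orthogonal f (W.smul_mem _ hw),
      Tsharp_eq_smul_of_mem_orthogonal f hw, smul_smul, smul_smul, mul_one_div_cancel hdet,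
      one_div_mul_cancel hdet, one_smul]
    exact ⟨rfl, rfl⟩
  refine ⟨Tsharp_apply_self f, Tsharp_mem_orthogonal f,
    fun w => Tsharp_eq_smul_of_mem_orthogonal f, hdet, ?_, hinv⟩
  have hInvOn : Set.InvOn ((1 / (gramMat f).det) • ·) (Tsharp f) W W :=
    ⟨fun w hw => (hinv w hw).2, fun w hw => (hinv w hw).1⟩
  exact hInvOn.bijOn (fun v _ => Tsharp_mem_orthogonal f v) (fun w hw => W.smul_mem _ hw)

theorem stmt_8 {V : Type*} [NormedAddCommGroup V] [InnerProductSpace ℝ V]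
    [FiniteDimensional ℝ V] (k : ℕ) (f : Fin (k+1) → V)
    (hf : LinearIndependent ℝ f) :
    -- (a) T♯(f_s) = 0 for every s
    (∀ s : Fin (k+1), Tsharp f (f s) = 0) ∧
    -- (b) T♯(v) ∈ W for every v
    (∀ v : V, Tsharp f v ∈ (Submodule.span ℝ (Set.range f))ᗮ) ∧
    -- (c) T♯(w) = (det Γ_f) • w for every w ∈ W
    (∀ w ∈ (Submodule.span ℝ (Set.range f))ᗮ, Tsharp f w = (gramMat f).det • w) ∧
    -- det Γ_f ≠ 0
    (gramMat f).det ≠ 0 ∧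
    -- the restriction of T♯ to W is a bijection of W onto itself
    Set.BijOn (Tsharp f) ((Submodule.span ℝ (Set.range f))ᗮ : Set V)
      ((Submodule.span ℝ (Set.range f))ᗮ : Set V) ∧
    -- whose inverse is given by w ↦ (1/det Γ_f) • w
    (∀ w ∈ (Submodule.span ℝ (Set.range f))ᗮ,
      Tsharp f ((1 / (gramMat f).det) • w) = w ∧
      (1 / (gramMat f).det) • Tsharp f w = w) :=
  stmt_8_general k f hf
end

section
/- Assume f₁,…,f_k are linearly independent. Then the standard control vector field is a scaled orthogonal projection of g onto the orthogonal complement of the span of the f_i: v₀ = (det Γ_f) · Π(g), where Π denotes the orthogonal projection of V onto (Sp[f₁,…,f_k])ᗮ. Equivalently, v₀ = (det Γ_f) · (g − Π'(g)) where Π' is the orthogonal projection onto Sp[f₁,…,f_k]. -/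
/-!
Write `Π'(g) = ∑ cᵢ fᵢ`. Orthogonality of `g - Π'(g)` to every `f_p` gives the normal equations
`Γ_f c = (⟪g, f_p⟫)_p`, so by Cramer's rule `(det Γ_f) cᵢ` is the determinant of `Γ_f` with its
`i`-th column replaced by `(⟪g, f_p⟫)_p`. The matrix in the `i`-th coefficient of `v₀` is that
matrix with the replaced column moved to the last position, which costs the sign `(-1)^(i+k)`.
Hence the coefficient of `fᵢ` in `v₀` is `-(det Γ_f) cᵢ`, i.e. `v₀ = (det Γ_f) (g - Π'(g))`.
-/

open scoped RealInnerProductSpace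

open scoped Matrix

theorem Matrix.cramer_mulVec {n R : Type*} [Fintype n] [DecidableEq n] [CommRing R]
    (A : Matrix n n R) (c : n → R) : A.cramer (A *ᵥ c) = A.det • c := by
  rw [cramer_eq_adjugate_mulVec, mulVec_mulVec, adjugate_mul, smul_mulVec, one_mulVec]

-- The permutation sends `last n` to `p` and `castSucc j` to `p.succAbove j`.
theorem Fin.snoc_removeNth_eq_comp_cycleRange {α : Type*} {n : ℕ} (x : Fin (n + 1) → α)
    (p : Fin (n + 1)) :
    Fin.snoc (p.removeNth x) (x p) = x ∘ ⇑((cycleRange p)⁻¹ * cycleRange (last n)) := by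
  rw [← insertNth_last', ← cons_comp_cycleRange, cons_removeNth_eq_comp_cycleRange_symm]
  rfl

theorem Matrix.det_submatrix_cycleRange_inv_mul {R : Type*} [CommRing R] {n : ℕ}
    (M : Matrix (Fin (n + 1)) (Fin (n + 1)) R) (p : Fin (n + 1)) :
    (M.submatrix id ((Fin.cycleRange p)⁻¹ * Fin.cycleRange (Fin.last n))).det
      = (-1) ^ ((p : ℕ) + n) * M.det := by
  rw [det_permute', map_mul, map_inv, Fin.sign_cycleRange, Fin.sign_cycleRange]
  simp [pow_add]

section

variable {V : Type*} [NormedAddCommGroup V] [InnerProductSpace ℝ V]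

theorem sigmaMat_comp_right {r s : ℕ} (a : Fin r → V) (b : Fin s → V)
    (σ : Equiv.Perm (Fin s)) : sigmaMat a (b ∘ σ) = (sigmaMat a b).submatrix id σ :=
  rfl

theorem sigmaMat_update_right {r s : ℕ} (a : Fin r → V) (b : Fin s → V) (q : Fin s) (x : V) :
    sigmaMat a (Function.update b q x) = (sigmaMat a b).updateCol q fun p => ⟪x, a p⟫ := by
  ext p q'
  rcases eq_or_ne q' q with rfl | hq'
  · simp [sigmaMat]
  · simp [sigmaMat, hq']

theorem sigmaMat_mulVec {r s : ℕ} (a : Fin r → V) (b : Fin s → V) (c : Fin s → ℝ) :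
    sigmaMat a b *ᵥ c = fun p => ⟪∑ q, c q • b q, a p⟫ := by
  ext p
  simp [Matrix.mulVec, dotProduct, sigmaMat, sum_inner, real_inner_smul_left, mul_comm]

theorem det_sigmaMat_snoc {k : ℕ} (f : Fin (k + 1) → V) (g : V) (i : Fin (k + 1)) :
    (sigmaMat f (Fin.snoc (fun j => f (i.succAbove j)) g)).det
      = (-1) ^ ((i : ℕ) + k) * ((sigmaMat f f).updateCol i fun p => ⟪g, f p⟫).det := by
  have hperm := Fin.snoc_removeNth_eq_comp_cycleRange (Function.update f i g) i
  simp only [Function.update_self, Fin.removeNth_update] at hperm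
  rw [← sigmaMat_update_right, ← Matrix.det_submatrix_cycleRange_inv_mul, ← sigmaMat_comp_right,
    ← hperm]
  rfl

theorem v0_eq_of_mulVec_eq {k : ℕ} (f : Fin (k + 1) → V) (g : V) (c : Fin (k + 1) → ℝ)
    (hc : sigmaMat f f *ᵥ c = fun p => ⟪g, f p⟫) :
    v0 f g = (sigmaMat f f).det • (g - ∑ i, c i • f i) := by
  have hcoeff (i : Fin (k + 1)) : (-1 : ℝ) ^ ((i : ℕ) + k + 1) *
      (sigmaMat f (Fin.snoc (fun j => f (i.succAbove j)) g)).det = -((sigmaMat f f).det * c i) := by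
    rw [det_sigmaMat_snoc, ← Matrix.cramer_apply, ← hc, Matrix.cramer_mulVec, Pi.smul_apply,
      smul_eq_mul, ← mul_assoc, ← pow_add, Odd.neg_one_pow ⟨(i : ℕ) + k, by ring⟩, neg_one_mul]
  simp only [v0, hcoeff, neg_smul, Finset.sum_neg_distrib, smul_sub, Finset.smul_sum, smul_smul]
  abel

theorem exists_starProjection_span_range_eq {k : ℕ} (f : Fin k → V)
    [(Submodule.span ℝ (Set.range f)).HasOrthogonalProjection] (g : V) :
    ∃ c : Fin k → ℝ, (Submodule.span ℝ (Set.range f)).starProjection g = ∑ i, c i • f i ∧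
      sigmaMat f f *ᵥ c = fun p => ⟪g, f p⟫ := by
  obtain ⟨c, hc⟩ := (Submodule.mem_span_range_iff_exists_fun ℝ).mp
    ((Submodule.span ℝ (Set.range f)).starProjection_apply_mem g)
  refine ⟨c, hc.symm, ?_⟩
  rw [sigmaMat_mulVec, hc]
  ext p
  exact Submodule.inner_orthogonalProjectionOnto_eq_of_mem_right
    ⟨f p, Submodule.subset_span (Set.mem_range_self p)⟩ g

end

theorem stmt_12_general {V : Type*} [NormedAddCommGroup V] [InnerProductSpace ℝ V]
    [FiniteDimensional ℝ V] (k : ℕ) (f : Fin (k+1) → V) (g : V) :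
    v0 f g =
      (sigmaMat f f).det •
        (Submodule.orthogonalProjection ((Submodule.span ℝ (Set.range f))ᗮ) g : V) ∧
    v0 f g =
      (sigmaMat f f).det •
        (g - (Submodule.orthogonalProjection (Submodule.span ℝ (Set.range f)) g : V)) := by
  obtain ⟨c, hproj, hc⟩ := exists_starProjection_span_range_eq f g
  have hv0 := v0_eq_of_mulVec_eq f g c hc
  rw [← hproj] at hv0
  simp only [Submodule.coe_orthogonalProjectionOnto_apply, Submodule.starProjection_orthogonal_val]
  exact ⟨hv0, hv0⟩

theorem stmt_12 {V : Type*} [NormedAddCommGroup V] [InnerProductSpace ℝ V]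
    [FiniteDimensional ℝ V] (k : ℕ) (f : Fin (k+1) → V) (g : V)
    (hf : LinearIndependent ℝ f) :
    v0 f g =
      (sigmaMat f f).det •
        (Submodule.orthogonalProjection ((Submodule.span ℝ (Set.range f))ᗮ) g : V) ∧
    v0 f g =
      (sigmaMat f f).det •
        (g - (Submodule.orthogonalProjection (Submodule.span ℝ (Set.range f)) g : V)) :=
  stmt_12_general k f g
end
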